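/- For every p ≥ 2 there exists a constant C > 0 such that for every m ∈ ℕ and every smooth, compactly supported function F : ℝ³ → ℝ^m one has ‖F‖_{L^p(ℝ³)}^{2p/3} ≤ C (‖∇F‖_{L²(ℝ³)} + ‖F‖_{L²(ℝ³)}) · ‖F‖_{L^{(4p−6)/3}(ℝ³)}^{(2p−3)/3}. -/

import Mathlib

/-! Writing `|F|^p = |F|^(p - 3/2) · |F|^(3/2)`, Hölder's inequality with exponents `4/3` and `4`
interpolates: `(∫ |F|^p)^(2/3) ≤ (∫ |F|^((4p-6)/3))^(1/2) · (∫ |F|^6)^(1/6)`. In dimension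
three the Gagliardo–Nirenberg–Sobolev inequality with exponents `2` and `6` bounds the last
factor by `‖∇F‖_{L²}`, and the operator norm of `∇F` is dominated by its Hilbert–Schmidt norm
by Cauchy–Schwarz. -/

open scoped ContDiff
open MeasureTheory
open scoped ENNReal NNReal

/-- Pointwise Hilbert–Schmidt norm of the total derivative of `F : ℝ³ → ℝᵐ`. -/
noncomputable def gradHSNorm {m : ℕ}
    (F : EuclideanSpace ℝ (Fin 3) → EuclideanSpace ℝ (Fin m))
    (x : EuclideanSpace ℝ (Fin 3)) : ℝ :=
  Real.sqrt (∑ i : Fin 3, ‖fderiv ℝ F x (EuclideanSpace.single i 1)‖ ^ 2)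

theorem ContinuousLinearMap.opNorm_le_sqrt_sum_sq_apply_single {ι E : Type*} [Fintype ι]
    [DecidableEq ι] [SeminormedAddCommGroup E] [NormedSpace ℝ E]
    (L : EuclideanSpace ℝ ι →L[ℝ] E) :
    ‖L‖ ≤ √(∑ i, ‖L (EuclideanSpace.single i 1)‖ ^ 2) := by
  refine L.opNorm_le_bound (Real.sqrt_nonneg _) fun v => ?_
  have hv : L v = ∑ i, v i • L (EuclideanSpace.single i 1) := by
    conv_lhs => rw [← (EuclideanSpace.basisFun ι ℝ).sum_repr v]
    simp [EuclideanSpace.basisFun_apply]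
  calc ‖L v‖ ≤ ∑ i, ‖v i‖ * ‖L (EuclideanSpace.single i 1)‖ := by
        rw [hv]
        exact (norm_sum_le _ _).trans_eq (by simp only [norm_smul])
    _ ≤ √(∑ i, ‖v i‖ ^ 2) * √(∑ i, ‖L (EuclideanSpace.single i 1)‖ ^ 2) :=
        Real.sum_mul_le_sqrt_mul_sqrt _ _ _
    _ = √(∑ i, ‖L (EuclideanSpace.single i 1)‖ ^ 2) * ‖v‖ := by
        rw [EuclideanSpace.norm_eq v, mul_comm]

section gradHSNorm

variable {m : ℕ} {F : EuclideanSpace ℝ (Fin 3) → EuclideanSpace ℝ (Fin m)}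

theorem norm_fderiv_le_gradHSNorm (x : EuclideanSpace ℝ (Fin 3)) :
    ‖fderiv ℝ F x‖ ≤ gradHSNorm F x :=
  (fderiv ℝ F x).opNorm_le_sqrt_sum_sq_apply_single

theorem ContDiff.continuous_gradHSNorm (hF : ContDiff ℝ 1 F) : Continuous (gradHSNorm F) := by
  have := hF.continuous_fderiv one_ne_zero
  unfold gradHSNorm
  fun_prop

theorem HasCompactSupport.gradHSNorm (hF : HasCompactSupport F) :
    HasCompactSupport (gradHSNorm F) :=
  (hF.fderiv (𝕜 := ℝ)).comp_left
    (g := fun L : EuclideanSpace ℝ (Fin 3) →L[ℝ] EuclideanSpace ℝ (Fin m) =>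
      √(∑ i, ‖L (EuclideanSpace.single i 1)‖ ^ 2))
    (by simp)

theorem integral_norm_fderiv_rpow_le_integral_gradHSNorm_rpow (hF : ContDiff ℝ 1 F)
    (hFc : HasCompactSupport F) {q : ℝ} (hq : 0 < q) :
    ∫ x, ‖fderiv ℝ F x‖ ^ q ≤ ∫ x, gradHSNorm F x ^ q :=
  integral_mono_of_nonneg (.of_forall fun x => by positivity)
    ((hF.continuous_gradHSNorm.rpow_const fun _ => Or.inr hq.le).integrable_of_hasCompactSupport
      (hFc.gradHSNorm.rpow_const hq.ne'))
    (.of_forall fun x => Real.rpow_le_rpow (norm_nonneg _) (norm_fderiv_le_gradHSNorm x) hq.le)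

end gradHSNorm

theorem integral_norm_rpow_add_le_mul {X E : Type*} [TopologicalSpace X] [MeasurableSpace X]
    [OpensMeasurableSpace X] [NormedAddCommGroup E] (μ : Measure X) [IsFiniteMeasureOnCompacts μ]
    {f : X → E} (hf : Continuous f) (hfc : HasCompactSupport f) {a b r s : ℝ} (ha : 0 < a)
    (hb : 0 < b) (hrs : r.HolderConjugate s) :
    ∫ x, ‖f x‖ ^ (a + b) ∂μ ≤
      (∫ x, ‖f x‖ ^ (a * r) ∂μ) ^ (1 / r) *
        (∫ x, ‖f x‖ ^ (b * s) ∂μ) ^ (1 / s) := by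
  have hmemLp {c : ℝ} (hc : 0 < c) (q : ℝ≥0∞) : MemLp (fun x => ‖f x‖ ^ c) q μ :=
    (hf.norm.rpow_const fun _ => Or.inr hc.le).memLp_of_hasCompactSupport
      (hfc.norm.rpow_const hc.ne')
  have := integral_mul_le_Lp_mul_Lq_of_nonneg hrs
    (.of_forall fun x => Real.rpow_nonneg (norm_nonneg (f x)) a)
    (.of_forall fun x => Real.rpow_nonneg (norm_nonneg (f x)) b) (hmemLp ha _) (hmemLp hb _)
  simpa only [← Real.rpow_add_of_nonneg (norm_nonneg _) ha.le hb.le,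
    ← Real.rpow_mul (norm_nonneg _)] using this

theorem integral_norm_rpow_rpow_two_thirds_le_mul {X E : Type*} [TopologicalSpace X]
    [MeasurableSpace X] [OpensMeasurableSpace X] [NormedAddCommGroup E] (μ : Measure X)
    [IsFiniteMeasureOnCompacts μ] {f : X → E} (hf : Continuous f) (hfc : HasCompactSupport f)
    {p : ℝ} (hp : 3 / 2 < p) :
    (∫ x, ‖f x‖ ^ p ∂μ) ^ (2 / 3 : ℝ) ≤
      (∫ x, ‖f x‖ ^ ((4 * p - 6) / 3) ∂μ) ^ (1 / 2 : ℝ) *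
        (∫ x, ‖f x‖ ^ (6 : ℝ) ∂μ) ^ (1 / 6 : ℝ) := by
  have hholder : ∫ x, ‖f x‖ ^ p ∂μ ≤
      (∫ x, ‖f x‖ ^ ((4 * p - 6) / 3) ∂μ) ^ (3 / 4 : ℝ) *
        (∫ x, ‖f x‖ ^ (6 : ℝ) ∂μ) ^ (1 / 4 : ℝ) := by
    have := integral_norm_rpow_add_le_mul μ hf hfc (sub_pos.mpr hp)
      (by norm_num : (0 : ℝ) < 3 / 2)
      (r := 4 / 3) (s := 4) (by rw [Real.holderConjugate_iff]; norm_num)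
    rwa [sub_add_cancel, show (p - 3 / 2) * (4 / 3) = (4 * p - 6) / 3 by ring,
      show (3 / 2 : ℝ) * 4 = 6 by norm_num, show (1 : ℝ) / (4 / 3) = 3 / 4 by norm_num] at this
  have hI (c : ℝ) : 0 ≤ ∫ x, ‖f x‖ ^ c ∂μ := integral_nonneg fun x => by positivity
  calc (∫ x, ‖f x‖ ^ p ∂μ) ^ (2 / 3 : ℝ)
      ≤ ((∫ x, ‖f x‖ ^ ((4 * p - 6) / 3) ∂μ) ^ (3 / 4 : ℝ) *
          (∫ x, ‖f x‖ ^ (6 : ℝ) ∂μ) ^ (1 / 4 : ℝ)) ^ (2 / 3 : ℝ) := by gcongr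
    _ = _ := by
        rw [Real.mul_rpow (by positivity) (by positivity), ← Real.rpow_mul (hI _),
          ← Real.rpow_mul (hI _)]
        norm_num

theorem integral_norm_rpow_rpow_inv_le_of_eq_inner {E F : Type*} [NormedAddCommGroup E]
    [NormedSpace ℝ E] [MeasurableSpace E] [BorelSpace E] [FiniteDimensional ℝ E]
    (μ : Measure E) [μ.IsAddHaarMeasure] [NormedAddCommGroup F] [InnerProductSpace ℝ F]
    {u : E → F} (hu : ContDiff ℝ 1 u) (h2u : HasCompactSupport u) {p p' : ℝ≥0} (hp : 1 ≤ p)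
    (hp'0 : p' ≠ 0) (hn : 0 < Module.finrank ℝ E)
    (hp' : (p' : ℝ)⁻¹ = p⁻¹ - (Module.finrank ℝ E : ℝ)⁻¹) :
    (∫ x, ‖u x‖ ^ (p' : ℝ) ∂μ) ^ (p' : ℝ)⁻¹ ≤
      eLpNormLESNormFDerivOfEqInnerConst μ p *
        (∫ x, ‖fderiv ℝ u x‖ ^ (p : ℝ) ∂μ) ^ (p : ℝ)⁻¹ := by
  have hsobolev := eLpNorm_le_eLpNorm_fderiv_of_eq_inner μ hu h2u hp hn hp'
  rw [(hu.continuous.memLp_of_hasCompactSupport h2u).eLpNorm_eq_integral_rpow_norm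
      (by simpa using hp'0) ENNReal.coe_ne_top,
    ((hu.continuous_fderiv one_ne_zero).memLp_of_hasCompactSupport
      (h2u.fderiv (𝕜 := ℝ))).eLpNorm_eq_integral_rpow_norm
      (by exact_mod_cast (zero_lt_one.trans_le hp).ne') ENNReal.coe_ne_top,
    ENNReal.coe_toReal, ENNReal.coe_toReal, ← ENNReal.ofReal_coe_nnreal,
    ← ENNReal.ofReal_mul NNReal.zero_le_coe] at hsobolev
  exact (ENNReal.ofReal_le_ofReal_iff (by positivity)).mp hsobolev

/-- for every `p ≥ 2` there is `C > 0` such that for every smooth compactly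
supported `F : ℝ³ → ℝᵐ`,
`‖F‖_{L^p}^{2p/3} ≤ C (‖∇F‖_{L²} + ‖F‖_{L²}) ‖F‖_{L^{(4p-6)/3}}^{(2p-3)/3}`. -/
theorem stmt_5 (p : ℝ) (hp2 : 2 ≤ p) :
    ∃ C : ℝ, 0 < C ∧
      ∀ (m : ℕ) (F : EuclideanSpace ℝ (Fin 3) → EuclideanSpace ℝ (Fin m)),
        ContDiff ℝ ∞ F → HasCompactSupport F →
        ((∫ x, ‖F x‖ ^ p) ^ (1 / p)) ^ (2 * p / 3) ≤
          C * ((∫ x, gradHSNorm F x ^ (2 : ℝ)) ^ ((1 : ℝ) / 2)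
              + (∫ x, ‖F x‖ ^ (2 : ℝ)) ^ ((1 : ℝ) / 2))
            * ((∫ x, ‖F x‖ ^ ((4 * p - 6) / 3)) ^ (3 / (4 * p - 6))) ^ ((2 * p - 3) / 3) := by
  set K : ℝ :=
    (eLpNormLESNormFDerivOfEqInnerConst (volume : Measure (EuclideanSpace ℝ (Fin 3))) 2 : ℝ)
  refine ⟨K + 1, by positivity, fun m F hF hFc => ?_⟩
  have hF1 : ContDiff ℝ 1 F := hF.of_le (by simp)
  set A := ∫ x, ‖F x‖ ^ p
  set R := ∫ x, ‖F x‖ ^ ((4 * p - 6) / 3)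
  set G := ∫ x, gradHSNorm F x ^ (2 : ℝ)
  set B := ∫ x, ‖F x‖ ^ (2 : ℝ)
  have hsobolev : (∫ x, ‖F x‖ ^ (6 : ℝ)) ^ (1 / 6 : ℝ) ≤ K * G ^ (1 / 2 : ℝ) := by
    have hGNS := integral_norm_rpow_rpow_inv_le_of_eq_inner volume hF1 hFc (p := 2) (p' := 6)
      (by norm_num) (by norm_num) (by simp) (by rw [finrank_euclideanSpace_fin]; norm_num)
    simp only [NNReal.coe_ofNat] at hGNS
    rw [one_div, one_div]
    exact hGNS.trans <| by
      gcongr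
      exact integral_norm_fderiv_rpow_le_integral_gradHSNorm_rpow hF1 hFc two_pos
  have hA : (A ^ (1 / p)) ^ (2 * p / 3) = A ^ (2 / 3 : ℝ) := by
    rw [← Real.rpow_mul (integral_nonneg fun x => by positivity)]
    congr 1
    field_simp
  have hR : (R ^ (3 / (4 * p - 6))) ^ ((2 * p - 3) / 3) = R ^ (1 / 2 : ℝ) := by
    rw [← Real.rpow_mul (integral_nonneg fun x => by positivity)]
    congr 1
    have : 4 * p - 6 ≠ 0 := by linarith
    field_simp
    ring
  rw [hA, hR]
  calc A ^ (2 / 3 : ℝ) ≤ R ^ (1 / 2 : ℝ) * (∫ x, ‖F x‖ ^ (6 : ℝ)) ^ (1 / 6 : ℝ) :=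
        integral_norm_rpow_rpow_two_thirds_le_mul volume hF.continuous hFc (by linarith)
    _ ≤ R ^ (1 / 2 : ℝ) * (K * G ^ (1 / 2 : ℝ)) := by gcongr
    _ ≤ (K + 1) * (G ^ (1 / 2 : ℝ) + B ^ (1 / 2 : ℝ)) * R ^ (1 / 2 : ℝ) := by
        have hK : 0 ≤ K := NNReal.coe_nonneg _
        have hB : 0 ≤ B ^ (1 / 2 : ℝ) :=
          Real.rpow_nonneg (integral_nonneg fun x => by positivity) _
        have hG : 0 ≤ G ^ (1 / 2 : ℝ) :=
          Real.rpow_nonneg (integral_nonneg fun x => Real.rpow_nonneg (Real.sqrt_nonneg _) _) _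
        have hR : 0 ≤ R ^ (1 / 2 : ℝ) :=
          Real.rpow_nonneg (integral_nonneg fun x => by positivity) _
        nlinarith [mul_nonneg hR hG, mul_nonneg (mul_nonneg hK hR) hB, mul_nonneg hR hB]
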